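/- arXiv:1108.0843 — 12 statements merged into one kernel-verified Lean document; each statement's English description precedes it below -/
import Mathlib

section
/- Let X and Y be metric spaces with Y separable, and let F be a multi-valued function from X to Y such that F(x) is a nonempty compact subset of Y for every x ∈ X. Then the set {x ∈ X : F is continuous at x} is a Gδ subset of X. -/
/-- A multi-valued function `F : X → Set Y` is continuous at `x` if there is `y ∈ F x`
such that for all `ε > 0` there is `δ > 0` such that every `x'` with `dist x' x < δ`
admits `y' ∈ F x'` with `dist y y' < ε`. -/
def MVContinuousAt {X Y : Type*} [MetricSpace X] [MetricSpace Y]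
    (F : X → Set Y) (x : X) : Prop :=
  ∃ y ∈ F x, ∀ ε > (0 : ℝ), ∃ δ > (0 : ℝ),
    ∀ x', dist x' x < δ → ∃ y' ∈ F x', dist y y' < ε

theorem points_of_continuity_Gdelta_of_compact_values
    {X Y : Type*} [MetricSpace X] [MetricSpace Y]
    [TopologicalSpace.SeparableSpace Y]
    (F : X → Set Y)
    (hne : ∀ x, (F x).Nonempty)
    (hcpt : ∀ x, IsCompact (F x)) :
    IsGδ {x : X | MVContinuousAt F x} := by
  set W : ℕ → Set X := fun n =>
    {x | ∃ δ > (0:ℝ), ∃ y : Y, ∀ x', dist x' x < δ →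
      ∃ y' ∈ F x', dist y y' < 1/(n+1)} with hWdef
  have hopen : ∀ n, IsOpen (W n) := by
    intro n
    rw [Metric.isOpen_iff]
    rintro x ⟨δ, hδ, y, hy⟩
    refine ⟨δ/2, by positivity, ?_⟩
    intro x'' hx''
    rw [Metric.mem_ball] at hx''
    refine ⟨δ/2, by positivity, y, fun x' hx' => hy x' ?_⟩
    calc dist x' x ≤ dist x' x'' + dist x'' x := dist_triangle _ _ _
      _ < δ/2 + δ/2 := by linarith
      _ = δ := by ring
  have heq : {x : X | MVContinuousAt F x} = ⋂ n, W n := by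
    ext x
    simp only [Set.mem_iInter, Set.mem_setOf_eq, hWdef, MVContinuousAt]
    constructor
    · rintro ⟨y, hyF, hy⟩ n
      obtain ⟨δ, hδ, h⟩ := hy (1/(n+1)) (by positivity)
      exact ⟨δ, hδ, y, h⟩
    · intro h
      choose δ hδ y hy using h
      have hz : ∀ n, ∃ z ∈ F x, dist (y n) z < 1/(n+1) := fun n =>
        hy n x (by simpa using hδ n)
      choose z hzF hzd using hz
      obtain ⟨a, haF, φ, hφ, hlim⟩ := (hcpt x).tendsto_subseq hzF
      refine ⟨a, haF, ?_⟩
      intro ε hε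
      obtain ⟨N, hN⟩ := exists_nat_one_div_lt (show (0:ℝ) < ε/3 by linarith)
      obtain ⟨M, hM⟩ := Metric.tendsto_atTop.1 hlim (ε/3) (by linarith)
      set j := max N M with hj
      have h1 : dist (z (φ j)) a < ε/3 := hM j (le_max_right _ _)
      have h3 : (1:ℝ)/(φ j + 1) ≤ 1/(N+1) := by
        apply one_div_le_one_div_of_le (by positivity)
        have hNj : N ≤ φ j := le_trans (le_max_left _ _) hφ.le_apply
        exact_mod_cast Nat.succ_le_succ hNj
      have h2 : dist (y (φ j)) (z (φ j)) < ε/3 :=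
        lt_of_lt_of_le (hzd (φ j)) (le_of_lt (lt_of_le_of_lt h3 hN))
      refine ⟨δ (φ j), hδ _, ?_⟩
      intro x' hx'
      obtain ⟨y', hy'F, hy'⟩ := hy (φ j) x' hx'
      have h4 : dist (y (φ j)) y' < ε/3 :=
        lt_of_lt_of_le hy' (le_of_lt (lt_of_le_of_lt h3 hN))
      refine ⟨y', hy'F, ?_⟩
      calc dist a y' ≤ dist a (z (φ j)) + dist (z (φ j)) (y (φ j)) + dist (y (φ j)) y' :=
            dist_triangle4 _ _ _ _
        _ < ε/3 + ε/3 + ε/3 := by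
            have h1' : dist a (z (φ j)) < ε/3 := by rw [dist_comm]; exact h1
            have h2' : dist (z (φ j)) (y (φ j)) < ε/3 := by rw [dist_comm]; exact h2
            exact add_lt_add (add_lt_add h1' h2') h4
        _ = ε := by ring
  rw [heq]
  exact IsGδ.iInter fun n => (hopen n).isGδ
end

section
/- Let X and Y be metric spaces with Y separable, let (y_s)_{s∈ℕ} be a sequence whose range is dense in Y, and let F be a multi-valued function from X to Y with F(x') nonempty for every x' ∈ X. Fix x ∈ X such that F(x) is compact. Then F is continuous at x if and only if for every n ∈ ℕ there exist s ∈ ℕ, δ > 0 and a real q < 1/(n+1) such that for every x' ∈ X with dist(x', x) < δ the infimum distance from y_s to F(x') is at most q. -/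
theorem continuity_iff_infDist_criterion
    {X Y : Type*} [MetricSpace X] [MetricSpace Y]
    [TopologicalSpace.SeparableSpace Y]
    (y : ℕ → Y) (hy : DenseRange y)
    (F : X → Set Y)
    (hne : ∀ x', (F x').Nonempty)
    (x : X) (hcpt : IsCompact (F x)) :
    MVContinuousAt F x ↔
      ∀ n : ℕ, ∃ (s : ℕ) (δ : ℝ) (q : ℝ), 0 < δ ∧ q < 1 / (n + 1) ∧
        ∀ x', dist x' x < δ → Metric.infDist (y s) (F x') ≤ q := by
  constructor
  · rintro ⟨y₀, hy₀, hc⟩ n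
    have hn1 : (0:ℝ) < (n:ℝ) + 1 := by positivity
    have hε : (0:ℝ) < 1 / (3 * ((n:ℝ) + 1)) := by positivity
    obtain ⟨s, hs⟩ := hy.exists_dist_lt y₀ hε
    obtain ⟨δ, hδ, hδ'⟩ := hc _ hε
    refine ⟨s, δ, 2 / (3 * ((n:ℝ) + 1)), hδ, ?_, ?_⟩
    · rw [div_lt_div_iff₀ (by positivity) hn1]
      nlinarith
    · intro x' hx'
      obtain ⟨y', hy', hdy'⟩ := hδ' x' hx'
      have heq : (2:ℝ) / (3 * ((n:ℝ) + 1)) = 1 / (3 * ((n:ℝ) + 1)) + 1 / (3 * ((n:ℝ) + 1)) := by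
        ring
      have h1 : Metric.infDist (y s) (F x') ≤ dist (y s) y' :=
        Metric.infDist_le_dist_of_mem hy'
      have h2 : dist (y s) y' ≤ dist (y s) y₀ + dist y₀ y' := dist_triangle _ _ _
      rw [dist_comm y₀ (y s)] at hs
      linarith
  · intro h
    choose s δ q hδ hq H using h
    have hzx : ∀ n, Metric.infDist (y (s n)) (F x) ≤ q n := fun n =>
      H n x (by simpa using hδ n)
    have hz := fun n => (hcpt.exists_infDist_eq_dist (hne x) (y (s n)))
    choose z hzF hzd using hz
    obtain ⟨a, haF, φ, hφ, hconv⟩ := hcpt.tendsto_subseq hzF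
    refine ⟨a, haF, fun ε hε => ?_⟩
    obtain ⟨N, hN⟩ := exists_nat_one_div_lt (show (0:ℝ) < ε/3 by linarith)
    obtain ⟨K, hK⟩ := (Metric.tendsto_atTop.mp hconv) (ε/3) (by linarith)
    set k := max K N with hk
    set n := φ k with hn
    refine ⟨δ n, hδ n, fun x' hx' => ?_⟩
    have h1 : Metric.infDist (y (s n)) (F x') ≤ q n := H n x' hx'
    have hNn : (N:ℝ) ≤ (n:ℝ) := by
      exact_mod_cast le_trans (le_max_right K N) hφ.le_apply
    have hlt : (1:ℝ)/((n:ℝ)+1) < ε/3 := by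
      calc (1:ℝ)/((n:ℝ)+1) ≤ 1/((N:ℝ)+1) := by
            apply one_div_le_one_div_of_le (by positivity) (by linarith)
        _ < ε/3 := hN
    have hq' : q n < ε/3 := lt_trans (hq n) hlt
    have h2 : Metric.infDist (y (s n)) (F x') < ε/3 := lt_of_le_of_lt h1 hq'
    obtain ⟨y', hy', hdy'⟩ := (Metric.infDist_lt_iff (hne x')).mp h2
    refine ⟨y', hy', ?_⟩
    have h3 : dist (y (s n)) (z n) ≤ q n := by rw [← hzd n]; exact hzx n
    have h4 : dist (z n) a < ε/3 := hK k (le_max_left K N)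
    have h5 : dist a y' ≤ dist a (z n) + dist (z n) (y (s n)) + dist (y (s n)) y' :=
      dist_triangle4 _ _ _ _
    rw [dist_comm a (z n), dist_comm (z n) (y (s n))] at h5
    linarith
end

section
/- Let X and Y be metric spaces with Y separable and exhaustible by compact sets, and let F be a multi-valued function from X to Y such that F(x) is a nonempty closed subset of Y for every x ∈ X. Then the set {x ∈ X : F is continuous at x} is a Σ⁰₃ subset of X, i.e., it is a countable union of Gδ sets. -/
/-- A topological space is exhaustible by compact sets if there is an increasing sequence
of compact sets, each contained in the interior of the next, covering the space. -/
def ExhaustibleByCompacts (Y : Type*) [TopologicalSpace Y] : Prop :=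
  ∃ K : ℕ → Set Y, (∀ n, IsCompact (K n)) ∧ (∀ n, K n ⊆ interior (K (n + 1))) ∧
    (⋃ n, K n) = Set.univ

/-- A set is `Σ⁰₃` if it is a countable union of `Gδ` sets. -/
def IsSigma03 {X : Type*} [TopologicalSpace X] (S : Set X) : Prop :=
  ∃ g : ℕ → Set X, (∀ n, IsGδ (g n)) ∧ S = ⋃ n, g n

open Set Metric Filter Topology

section LowerLimit

variable {X Y : Type*}

def lowerInverse (F : X → Set Y) (s : Set Y) : Set X := {x | (F x ∩ s).Nonempty}

lemma lowerInverse_mono (F : X → Set Y) {s t : Set Y} (hst : s ⊆ t) :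
    lowerInverse F s ⊆ lowerInverse F t :=
  fun _ ⟨y, hyF, hys⟩ => ⟨y, hyF, hst hys⟩

variable [TopologicalSpace X] [MetricSpace Y]

/-- The Kuratowski lower limit of `F` at `x`; here neighbourhoods of `x` contain `x` itself. -/
def lowerLimit (F : X → Set Y) (x : X) : Set Y :=
  {y | ∀ ε > 0, x ∈ interior (lowerInverse F (ball y ε))}

lemma lowerLimit_subset_closure (F : X → Set Y) (x : X) : lowerLimit F x ⊆ closure (F x) := by
  intro y hy
  refine Metric.mem_closure_iff.mpr fun ε hε => ?_
  obtain ⟨z, hzF, hzy⟩ := interior_subset (hy ε hε)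
  exact ⟨z, hzF, mem_ball'.mp hzy⟩

lemma exists_mem_lowerLimit_of_isCompact {F : X → Set Y} {x : X} {K : Set Y} (hK : IsCompact K)
    (h : ∀ n : ℕ, ∃ d ∈ K, x ∈ interior (lowerInverse F (ball d (1 / (n + 1))))) :
    (K ∩ lowerLimit F x).Nonempty := by
  choose d hdK hd using h
  obtain ⟨y, hyK, φ, hφ, hdy⟩ := hK.tendsto_subseq hdK
  refine ⟨y, hyK, fun ε hε => ?_⟩
  have hradius : Tendsto (fun j => 1 / ((φ j : ℝ) + 1)) atTop (𝓝 0) :=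
    tendsto_one_div_add_atTop_nhds_zero_nat.comp hφ.tendsto_atTop
  obtain ⟨j, hj_radius, hj_dist⟩ := ((hradius.eventually_lt_const (half_pos hε)).and
    ((tendsto_iff_dist_tendsto_zero.mp hdy).eventually_lt_const (half_pos hε))).exists
  have hball : ball (d (φ j)) (1 / (φ j + 1)) ⊆ ball y ε :=
    ball_subset_ball' (by rw [Function.comp_apply] at hj_dist; linarith)
  exact interior_mono (lowerInverse_mono F hball) (hd (φ j))

lemma setOf_inter_lowerLimit_nonempty_eq {F : X → Set Y} {K : Set Y} (hK : IsCompact K) :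
    {x | (K ∩ lowerLimit F x).Nonempty} =
      ⋂ n : ℕ, ⋃ d ∈ K, interior (lowerInverse F (ball d (1 / (n + 1)))) := by
  ext x
  simp only [mem_ofPred_eq, mem_iInter, mem_iUnion, exists_prop]
  refine ⟨fun ⟨y, hyK, hy⟩ n => ⟨y, hyK, hy _ Nat.one_div_pos_of_nat⟩,
    exists_mem_lowerLimit_of_isCompact hK⟩

lemma isGδ_setOf_inter_lowerLimit_nonempty (F : X → Set Y) {K : Set Y} (hK : IsCompact K) :
    IsGδ {x | (K ∩ lowerLimit F x).Nonempty} := by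
  rw [setOf_inter_lowerLimit_nonempty_eq hK]
  exact .iInter_of_isOpen fun _ => isOpen_biUnion fun _ _ => isOpen_interior

end LowerLimit

lemma mvContinuousAt_iff {X Y : Type*} [MetricSpace X] [MetricSpace Y] (F : X → Set Y) (x : X) :
    MVContinuousAt F x ↔ (F x ∩ lowerLimit F x).Nonempty := by
  simp_rw [MVContinuousAt, lowerLimit, lowerInverse, inter_nonempty, mem_ball',
    mem_interior_iff_mem_nhds, Metric.mem_nhds_iff, subset_def, mem_ball, mem_ofPred_eq]

theorem points_of_continuity_Sigma03_of_closed_values_general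
    {X Y : Type*} [MetricSpace X] [MetricSpace Y]
    (hY : ExhaustibleByCompacts Y)
    (F : X → Set Y)
    (hcl : ∀ x, IsClosed (F x)) :
    IsSigma03 {x : X | MVContinuousAt F x} := by
  obtain ⟨K, hK, -, hcover⟩ := hY
  refine ⟨fun m => {x | (K m ∩ lowerLimit F x).Nonempty},
    fun m => isGδ_setOf_inter_lowerLimit_nonempty F (hK m), ?_⟩
  ext x
  have hlim : F x ∩ lowerLimit F x = lowerLimit F x :=
    inter_eq_right.mpr ((hcl x).closure_eq ▸ lowerLimit_subset_closure F x)
  rw [mem_ofPred_eq, mvContinuousAt_iff, hlim, ← univ_inter (lowerLimit F x), ← hcover,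
    iUnion_inter, nonempty_iUnion, mem_iUnion]
  rfl

theorem points_of_continuity_Sigma03_of_closed_values
    {X Y : Type*} [MetricSpace X] [MetricSpace Y]
    [TopologicalSpace.SeparableSpace Y]
    (hY : ExhaustibleByCompacts Y)
    (F : X → Set Y)
    (hne : ∀ x, (F x).Nonempty)
    (hcl : ∀ x, IsClosed (F x)) :
    IsSigma03 {x : X | MVContinuousAt F x} :=
  points_of_continuity_Sigma03_of_closed_values_general hY F hcl
end

section
/- Let X be a metric space, m ∈ ℕ, and let F be a multi-valued function from X to ℝ^m (Euclidean space of dimension m) such that F(x) is a nonempty closed subset of ℝ^m for every x ∈ X. Then the set {x ∈ X : F is continuous at x} is a countable union of Gδ subsets of X (a Σ⁰₃ set). -/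
open TopologicalSpace Metric Filter Topology

theorem points_of_continuity_Sigma03_of_closed_values_euclidean
    {X : Type*} [MetricSpace X] (m : ℕ)
    (F : X → Set (EuclideanSpace ℝ (Fin m)))
    (hne : ∀ x, (F x).Nonempty)
    (hcl : ∀ x, IsClosed (F x)) :
    IsSigma03 {x : X | MVContinuousAt F x} := by
  classical
  have : Nonempty (EuclideanSpace ℝ (Fin m)) := ⟨0⟩
  let q : ℕ → EuclideanSpace ℝ (Fin m) := denseSeq _
  have hq : DenseRange q := denseRange_denseSeq _
  -- the basic open pieces
  let G : ℕ → ℕ → Set X := fun j k =>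
    {x | ∃ δ > (0:ℝ), ∀ x', dist x' x < δ →
      ∃ y ∈ F x', dist y (q j) < 1/((k:ℝ)+1)}
  have hGopen : ∀ j k, IsOpen (G j k) := by
    intro j k
    rw [Metric.isOpen_iff]
    rintro x ⟨δ, hδ, hx⟩
    refine ⟨δ/2, by linarith, fun z hz => ⟨δ/2, by linarith, fun x' hx' => ?_⟩⟩
    have hz' : dist z x < δ/2 := hz
    have htri := dist_triangle x' z x
    exact hx x' (by linarith)
  refine ⟨fun i => ⋂ k : ℕ, ⋃ j : ℕ, ⋃ (_ : dist (q j) (q i) ≤ 1), G j k, ?_, ?_⟩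
  · intro i
    exact IsGδ.iInter fun k =>
      (isOpen_iUnion fun j => isOpen_iUnion fun _ => hGopen j k).isGδ
  · ext x
    simp only [Set.mem_setOf_eq, Set.mem_iUnion, Set.mem_iInter]
    constructor
    · rintro ⟨y, hyF, hy⟩
      obtain ⟨i, hi⟩ := hq.exists_dist_lt y (by norm_num : (0:ℝ) < 1/2)
      refine ⟨i, fun k => ?_⟩
      have hkpos : (0:ℝ) < 1/(2*((k:ℝ)+1)) := by positivity
      obtain ⟨j, hj⟩ := hq.exists_dist_lt y hkpos
      obtain ⟨δ, hδ, hδ'⟩ := hy (1/(2*((k:ℝ)+1))) hkpos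
      have hk2 : 1/(2*((k:ℝ)+1)) ≤ 1/2 := by
        apply one_div_le_one_div_of_le
        · norm_num
        · have : (0:ℝ) ≤ (k:ℝ) := Nat.cast_nonneg k
          linarith
      have hsum : 1/(2*((k:ℝ)+1)) + 1/(2*((k:ℝ)+1)) = 1/((k:ℝ)+1) := by
        field_simp
        norm_num
      refine ⟨j, ?_, δ, hδ, fun x' hx' => ?_⟩
      · calc dist (q j) (q i) ≤ dist (q j) y + dist y (q i) := dist_triangle _ _ _
          _ ≤ 1/2 + 1/2 := by
              rw [dist_comm (q j) y]
              exact add_le_add (le_trans hj.le hk2) hi.le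
          _ = 1 := by norm_num
      · obtain ⟨y', hy'F, hy'⟩ := hδ' x' hx'
        refine ⟨y', hy'F, ?_⟩
        calc dist y' (q j) ≤ dist y' y + dist y (q j) := dist_triangle _ _ _
          _ < 1/(2*((k:ℝ)+1)) + 1/(2*((k:ℝ)+1)) := by
              rw [dist_comm y' y]
              exact add_lt_add hy' hj
          _ = 1/((k:ℝ)+1) := hsum
    · rintro ⟨i, hi⟩
      choose j hj1 δ hδpos hδ using hi
      have hyx : ∀ k, ∃ y ∈ F x, dist y (q (j k)) < 1/((k:ℝ)+1) := by
        intro k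
        exact hδ k x (by simpa using hδpos k)
      choose yy hyyF hyy using hyx
      have hzball : ∀ k, q (j k) ∈ closedBall (q i) 1 := fun k => hj1 k
      obtain ⟨y, _hyball, φ, hφ, hlim⟩ :=
        (isCompact_closedBall (q i) 1).tendsto_subseq hzball
      have hdistz : Tendsto (fun n => dist (q (j (φ n))) y) atTop (𝓝 0) :=
        tendsto_iff_dist_tendsto_zero.mp hlim
      have hinv : Tendsto (fun n : ℕ => 1/((φ n : ℝ)+1)) atTop (𝓝 0) := by
        apply squeeze_zero (fun n => by positivity)
          (g := fun n : ℕ => 1/((n:ℝ)+1))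
        · intro n
          apply one_div_le_one_div_of_le
          · positivity
          · have h : n ≤ φ n := hφ.le_apply
            have h' : (n:ℝ) ≤ (φ n : ℝ) := Nat.cast_le.mpr h
            linarith
        · exact tendsto_one_div_add_atTop_nhds_zero_nat
      have hytend : Tendsto (fun n => yy (φ n)) atTop (𝓝 y) := by
        rw [tendsto_iff_dist_tendsto_zero]
        apply squeeze_zero (fun n => dist_nonneg)
          (g := fun n => 1/((φ n : ℝ)+1) + dist (q (j (φ n))) y)
        · intro n
          calc dist (yy (φ n)) y ≤ dist (yy (φ n)) (q (j (φ n))) + dist (q (j (φ n))) y :=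
                dist_triangle _ _ _
            _ ≤ 1/((φ n : ℝ)+1) + dist (q (j (φ n))) y := by
                have := (hyy (φ n)).le
                linarith
        · simpa using hinv.add hdistz
      have hyF : y ∈ F x :=
        (hcl x).mem_of_tendsto hytend (Eventually.of_forall fun n => hyyF (φ n))
      refine ⟨y, hyF, fun ε hε => ?_⟩
      obtain ⟨K0, hK0⟩ := exists_nat_one_div_lt (show (0:ℝ) < ε/2 by linarith)
      have hev : ∀ᶠ n in atTop, dist (q (j (φ n))) y < ε/2 :=
        hdistz.eventually (eventually_lt_nhds (show (0:ℝ) < ε/2 by linarith))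
      obtain ⟨K, hK1, hK2⟩ := (hev.and (eventually_ge_atTop K0)).exists
      refine ⟨δ (φ K), hδpos (φ K), fun x' hx' => ?_⟩
      obtain ⟨y', hy'F, hy'⟩ := hδ (φ K) x' hx'
      refine ⟨y', hy'F, ?_⟩
      have hφK : (K0:ℝ) ≤ (φ K : ℝ) := by
        have h1 : K0 ≤ K := hK2
        have h2 : K ≤ φ K := hφ.le_apply
        exact_mod_cast le_trans h1 h2
      have hsmall : 1/((φ K : ℝ)+1) < ε/2 := by
        have hle : 1/((φ K : ℝ)+1) ≤ 1/((K0:ℝ)+1) := by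
          apply one_div_le_one_div_of_le
          · positivity
          · linarith
        linarith
      calc dist y y' ≤ dist y (q (j (φ K))) + dist (q (j (φ K))) y' := dist_triangle _ _ _
        _ < ε/2 + ε/2 := by
            rw [dist_comm y (q (j (φ K))), dist_comm (q (j (φ K))) y']
            exact add_lt_add hK1 (lt_of_lt_of_le hy' hsmall.le)
        _ = ε := by ring
end

section
/- Let X be a metric space, m ∈ ℕ, and let F be a multi-valued function from X to ℝ^m (Euclidean space of dimension m) such that F(x) is a nonempty closed bounded subset of ℝ^m for every x ∈ X. Then the set {x ∈ X : F is continuous at x} is a Gδ subset of X. -/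
theorem points_of_continuity_Gdelta_of_closed_bounded_values_euclidean
    {X : Type*} [MetricSpace X] (m : ℕ)
    (F : X → Set (EuclideanSpace ℝ (Fin m)))
    (hne : ∀ x, (F x).Nonempty)
    (hcl : ∀ x, IsClosed (F x))
    (hbd : ∀ x, Bornology.IsBounded (F x)) :
    IsGδ {x : X | MVContinuousAt F x} := by
  have key : {x : X | MVContinuousAt F x} =
      ⋂ n : ℕ, {x : X | ∃ y : EuclideanSpace ℝ (Fin m), ∃ δ > (0:ℝ),
        ∀ x', dist x' x < δ → ∃ y' ∈ F x', dist y y' < 1/(n+1)} := by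
    ext x
    simp only [Set.mem_iInter, Set.mem_setOf_eq]
    constructor
    · rintro ⟨y, hyF, h⟩ n
      obtain ⟨δ, hδ, hh⟩ := h (1/(n+1)) (by positivity)
      exact ⟨y, δ, hδ, hh⟩
    · intro h
      choose y δ hδ hy using h
      have hz : ∀ n, ∃ z ∈ F x, dist (y n) z < 1/(n+1) := fun n =>
        hy n x (by simpa using hδ n)
      choose z hzF hzd using hz
      have hcomp : IsCompact (F x) :=
        Metric.isCompact_of_isClosed_isBounded (hcl x) (hbd x)
      obtain ⟨w, hwF, φ, hφ, hconv⟩ := hcomp.tendsto_subseq hzF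
      refine ⟨w, hwF, ?_⟩
      intro ε hε
      obtain ⟨N1, hN1⟩ := (Metric.tendsto_atTop.1 hconv) (ε/2) (by linarith)
      obtain ⟨N2, hN2⟩ := exists_nat_gt (4/ε)
      set n := max N1 N2 with hn
      have hzw : dist (z (φ n)) w < ε/2 := hN1 n (le_max_left _ _)
      have hφn : (n : ℝ) ≤ φ n := by exact_mod_cast hφ.id_le n
      have hsmall : 1/((φ n : ℝ)+1) < ε/4 := by
        have h1 : (4/ε : ℝ) < (φ n : ℝ) + 1 := by
          have : (N2 : ℝ) ≤ n := by exact_mod_cast le_max_right N1 N2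
          linarith
        have h2 : (0:ℝ) < (φ n : ℝ) + 1 := by positivity
        rw [div_lt_iff₀ h2]
        rw [div_lt_iff₀ hε] at h1
        linarith
      refine ⟨δ (φ n), hδ (φ n), ?_⟩
      intro x' hx'
      obtain ⟨y', hy'F, hy'd⟩ := hy (φ n) x' hx'
      refine ⟨y', hy'F, ?_⟩
      have := hzd (φ n)
      calc dist w y' ≤ dist w (z (φ n)) + dist (z (φ n)) (y (φ n)) + dist (y (φ n)) y' :=
            dist_triangle4 _ _ _ _
        _ < ε/2 + ε/4 + ε/4 := by
            rw [dist_comm (z (φ n)) w] at hzw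
            rw [dist_comm (y (φ n)) (z (φ n))] at this
            exact add_lt_add (add_lt_add hzw (lt_trans this hsmall)) (lt_trans hy'd hsmall)
        _ = ε := by ring
  rw [key]
  refine .iInter_of_isOpen fun n => ?_
  rw [Metric.isOpen_iff]
  rintro x ⟨y, δ, hδ, hy⟩
  refine ⟨δ/2, by linarith, ?_⟩
  intro x'' hx''
  refine ⟨y, δ/2, by linarith, fun x' hx' => ?_⟩
  apply hy
  calc dist x' x ≤ dist x' x'' + dist x'' x := dist_triangle _ _ _
    _ < δ/2 + δ/2 := add_lt_add hx' (by simpa [Metric.mem_ball] using hx'')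
    _ = δ := by ring
end

section
/- Let X₀, X₁ and Y be metric spaces with Y nonempty, and let f : X₀ → X₁ be a topological embedding (a homeomorphism onto its image) whose image f[X₀] is closed in X₁. Let F be a multi-valued function from X₀ to Y with nonempty values, and define the multi-valued function F̃ from X₁ to Y by F̃(x₁) = F(x₀) if x₁ = f(x₀) for some x₀ ∈ X₀, and F̃(x₁) = Y otherwise. Then F̃ is continuous at a point x₁ ∈ X₁ if and only if either x₁ ∉ f[X₀], or x₁ = f(x₀) for some x₀ ∈ X₀ and F is continuous at x₀. Consequently, if P₀ and P₁ denote the sets of points of continuity of F and F̃ respectively, then P₁ = f[P₀] ∪ (X₁ \ f[X₀]). -/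
theorem extension_lemma_continuity
    {X₀ X₁ Y : Type*} [MetricSpace X₀] [MetricSpace X₁] [MetricSpace Y]
    [Nonempty Y]
    (f : X₀ → X₁)
    (hf : Topology.IsEmbedding f)
    (hfr : IsClosed (Set.range f))
    (F : X₀ → Set Y)
    (hne : ∀ x₀, (F x₀).Nonempty)
    (Ft : X₁ → Set Y)
    (hFt₁ : ∀ x₀, Ft (f x₀) = F x₀)
    (hFt₂ : ∀ x₁, x₁ ∉ Set.range f → Ft x₁ = Set.univ) :
    (∀ x₁ : X₁, MVContinuousAt Ft x₁ ↔
        (x₁ ∉ Set.range f ∨ ∃ x₀, f x₀ = x₁ ∧ MVContinuousAt F x₀)) ∧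
      {x₁ : X₁ | MVContinuousAt Ft x₁} =
        f '' {x₀ : X₀ | MVContinuousAt F x₀} ∪ (Set.range f)ᶜ := by
  have main : ∀ x₁ : X₁, MVContinuousAt Ft x₁ ↔
      (x₁ ∉ Set.range f ∨ ∃ x₀, f x₀ = x₁ ∧ MVContinuousAt F x₀) := by
    intro x₁
    constructor
    · intro h
      by_cases hx : x₁ ∈ Set.range f
      · right
        obtain ⟨x₀, rfl⟩ := hx
        refine ⟨x₀, rfl, ?_⟩
        obtain ⟨y, hy, hcont⟩ := h
        rw [hFt₁] at hy
        refine ⟨y, hy, ?_⟩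
        intro ε hε
        obtain ⟨δ, hδ, hd⟩ := hcont ε hε
        obtain ⟨δ', hδ', hmap⟩ :=
          Metric.continuousAt_iff.mp (hf.continuous.continuousAt (x := x₀)) δ hδ
        refine ⟨δ', hδ', fun x₀' hx' => ?_⟩
        obtain ⟨y', hy', hdy⟩ := hd (f x₀') (hmap hx')
        rw [hFt₁] at hy'
        exact ⟨y', hy', hdy⟩
      · exact Or.inl hx
    · rintro (hx | ⟨x₀, rfl, hF⟩)
      · obtain ⟨y⟩ := ‹Nonempty Y›
        refine ⟨y, by rw [hFt₂ x₁ hx]; trivial, ?_⟩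
        intro ε hε
        obtain ⟨δ, hδ, hball⟩ :=
          Metric.isOpen_iff.mp hfr.isOpen_compl x₁ hx
        refine ⟨δ, hδ, fun x' hx' => ?_⟩
        have hx'r : x' ∉ Set.range f := hball (by simpa [Metric.mem_ball] using hx')
        exact ⟨y, by rw [hFt₂ x' hx'r]; trivial, by simpa using hε⟩
      · obtain ⟨y, hy, hcont⟩ := hF
        refine ⟨y, by rw [hFt₁]; exact hy, ?_⟩
        intro ε hε
        obtain ⟨δ₀, hδ₀, hd⟩ := hcont ε hε
        obtain ⟨U, hU, hUeq⟩ :=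
          hf.isInducing.isOpen_iff.mp (Metric.isOpen_ball (x := x₀) (ε := δ₀))
        have hmem : f x₀ ∈ U := by
          have : x₀ ∈ f ⁻¹' U := by rw [hUeq]; exact Metric.mem_ball_self hδ₀
          exact this
        obtain ⟨δ, hδ, hball⟩ := Metric.isOpen_iff.mp hU (f x₀) hmem
        refine ⟨δ, hδ, fun x' hx' => ?_⟩
        by_cases hxr : x' ∈ Set.range f
        · obtain ⟨x₀', rfl⟩ := hxr
          have hb : x₀' ∈ Metric.ball x₀ δ₀ := by
            rw [← hUeq]; exact hball (by simpa [Metric.mem_ball] using hx')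
          obtain ⟨y', hy', hdy⟩ := hd x₀' (by simpa [Metric.mem_ball] using hb)
          exact ⟨y', by rw [hFt₁]; exact hy', hdy⟩
        · exact ⟨y, by rw [hFt₂ x' hxr]; trivial, by simpa using hε⟩
  refine ⟨main, ?_⟩
  ext x₁
  simp only [Set.mem_setOf_eq, main, Set.mem_union, Set.mem_image, Set.mem_compl_iff]
  aesop
end

section
/- Let X and Y be complete separable metric spaces and let F be a multi-valued function from X to Y with nonempty values whose graph is an analytic subset of X × Y. Then the set {x ∈ X : F is continuous at x} is an analytic subset of X. -/
open MeasureTheory Set Metric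

lemma analyticSet_inter_open_aux {α : Type*} [TopologicalSpace α] {s U : Set α}
    (hs : MeasureTheory.AnalyticSet s) (hU : IsOpen U) :
    MeasureTheory.AnalyticSet (s ∩ U) := by
  obtain ⟨β, hβ, hβ', f, hf, rfl⟩ :=
    MeasureTheory.analyticSet_iff_exists_polishSpace_range.1 hs
  rw [← Set.image_preimage_eq_range_inter]
  exact (hU.preimage hf).analyticSet_image hf

theorem points_of_continuity_analytic_of_analytic_graph
    {X Y : Type*} [MetricSpace X] [CompleteSpace X]
    [TopologicalSpace.SeparableSpace X]
    [MetricSpace Y] [CompleteSpace Y] [TopologicalSpace.SeparableSpace Y]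
    (F : X → Set Y)
    (hne : ∀ x, (F x).Nonempty)
    (hgraph : MeasureTheory.AnalyticSet {p : X × Y | p.2 ∈ F p.1}) :
    MeasureTheory.AnalyticSet {x : X | MVContinuousAt F x} := by
  set B : ℝ → Set (X × Y) := fun ε => {p : X × Y | ∃ y' ∈ F p.1, dist p.2 y' < ε} with hBdef
  have hB : ∀ ε : ℝ, AnalyticSet (B ε) := by
    intro ε
    have himg : B ε = (fun q : (X × Y) × Y => (q.1.1, q.2)) ''
        (((fun q : (X × Y) × Y => q.1) ⁻¹' {p : X × Y | p.2 ∈ F p.1}) ∩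
          {q : (X × Y) × Y | dist q.2 q.1.2 < ε}) := by
      ext p
      constructor
      · rintro ⟨y', hy', hd⟩
        exact ⟨((p.1, y'), p.2), ⟨hy', hd⟩, rfl⟩
      · rintro ⟨q, ⟨hq1, hq2⟩, rfl⟩
        exact ⟨q.1.2, hq1, hq2⟩
    rw [himg]
    refine AnalyticSet.image_of_continuous ?_ (by fun_prop)
    refine analyticSet_inter_open_aux (hgraph.preimage continuous_fst) ?_
    exact isOpen_lt (by fun_prop) continuous_const
  set T : Set (X × Y) := ⋂ n : ℕ,
    ({p : X × Y | p.2 ∈ F p.1} ∩ interior (B (1 / (n + 1)))) with hTdef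
  have hT : AnalyticSet T :=
    AnalyticSet.iInter fun n => analyticSet_inter_open_aux hgraph isOpen_interior
  have key : {x : X | MVContinuousAt F x} = Prod.fst '' T := by
    ext x
    constructor
    · rintro ⟨y, hy, hc⟩
      refine ⟨(x, y), ?_, rfl⟩
      rw [hTdef, mem_iInter]
      intro n
      refine ⟨hy, ?_⟩
      have hpos : (0 : ℝ) < 1 / (n + 1) / 2 := by positivity
      obtain ⟨δ, hδpos, hδ⟩ := hc (1 / (n + 1) / 2) hpos
      rw [mem_interior_iff_mem_nhds, Metric.mem_nhds_iff]
      refine ⟨min δ (1 / (n + 1) / 2), lt_min hδpos hpos, ?_⟩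
      rintro ⟨x', z⟩ hmem
      rw [Metric.mem_ball, Prod.dist_eq, max_lt_iff] at hmem
      obtain ⟨hx', hz⟩ := hmem
      obtain ⟨y', hy', hyy'⟩ := hδ x' (lt_of_lt_of_le hx' (min_le_left _ _))
      refine ⟨y', hy', ?_⟩
      have hz' : dist z y < 1 / (n + 1) / 2 := lt_of_lt_of_le hz (min_le_right _ _)
      calc dist z y' ≤ dist z y + dist y y' := dist_triangle _ _ _
        _ < 1 / (n + 1) / 2 + 1 / (n + 1) / 2 := by linarith
        _ = 1 / (n + 1) := add_halves _
    · rintro ⟨⟨x', y⟩, hp, rfl⟩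
      rw [hTdef, mem_iInter] at hp
      refine ⟨y, (hp 0).1, ?_⟩
      intro ε hε
      obtain ⟨n, hn⟩ := exists_nat_one_div_lt hε
      obtain ⟨r, hrpos, hr⟩ := Metric.mem_nhds_iff.1 (mem_interior_iff_mem_nhds.1 (hp n).2)
      refine ⟨r, hrpos, ?_⟩
      intro x'' hx''
      have hmem : ((x'', y) : X × Y) ∈ ball ((x', y) : X × Y) r := by
        rw [Metric.mem_ball, Prod.dist_eq]
        simp only [dist_self]
        exact max_lt hx'' hrpos
      obtain ⟨y', hy', hd⟩ := hr hmem
      exact ⟨y', hy', hd.trans hn⟩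
  rw [key]
  exact hT.image_of_continuous continuous_fst
end

section
/- There exists a multi-valued function F from the unit interval [0,1] to [0,1] such that F(x) is nonempty for every x ∈ [0,1], the graph of F is a Borel subset of [0,1] × [0,1], and the set of points of continuity of F is an analytic subset of [0,1] which is not Borel. -/
open MeasureTheory Set Filter Topology PiNat

lemma MeasureTheory.AnalyticSet.exists_continuous_range_eq {α : Type*} [TopologicalSpace α]
    {s : Set α} (hs : AnalyticSet s) (hne : s.Nonempty) :
    ∃ f : (ℕ → ℕ) → α, Continuous f ∧ range f = s := by
  rw [AnalyticSet] at hs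
  exact hs.resolve_left hne.ne_empty

namespace PiNat

lemma tendsto_of_res_eq {α : Type*} [TopologicalSpace α] {x : ℕ → ℕ → α} {y : ℕ → α}
    (h : ∀ n, res (x n) n = res y n) : Tendsto x atTop (𝓝 y) := by
  refine tendsto_pi_nhds.2 fun i => tendsto_const_nhds.congr' ?_
  filter_upwards [eventually_gt_atTop i] with n hn
  exact (res_eq_res.1 (h n) hn).symm

lemma res_suffix {α : Type*} (x : ℕ → α) {m n : ℕ} (h : m ≤ n) : res x m <:+ res x n := by
  induction n, h using Nat.le_induction with
  | base => exact List.suffix_rfl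
  | succ n _ ih => exact ih.trans (List.suffix_cons _ _)

end PiNat

namespace BaireSpace

lemma not_countable : ¬ Countable (ℕ → ℕ) := by
  rw [← Cardinal.mk_le_aleph0_iff]
  simpa using Cardinal.aleph0_lt_continuum

/-- Reading `a` as the code of the set of pairs of finite sequences `(u, v)` with
`a (encode (u, v)) = 1`, `codedSet a` is the projection of the branches through that set. -/
def codedSet (a : ℕ → ℕ) : Set (ℕ → ℕ) :=
  {y | ∃ x : ℕ → ℕ, ∀ n, a (Encodable.encode (res y n, res x n)) = 1}

def diagonal : Set (ℕ → ℕ) := {a | a ∈ codedSet a}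

lemma isLocallyConstant_apply_encode_res (n : ℕ) :
    IsLocallyConstant fun p : (ℕ → ℕ) × (ℕ → ℕ) =>
      p.1 (Encodable.encode (res p.1 n, res p.2 n)) := by
  rw [IsLocallyConstant.iff_eventually_eq]
  rintro ⟨a, x⟩
  set k := Encodable.encode (res a n, res x n)
  have hnhds : cylinder a (max n (k + 1)) ×ˢ cylinder x n ∈ 𝓝 (a, x) :=
    prod_mem_nhds ((isOpen_cylinder _ _ _).mem_nhds (self_mem_cylinder _ _))
      ((isOpen_cylinder _ _ _).mem_nhds (self_mem_cylinder _ _))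
  filter_upwards [hnhds] with ⟨b, z⟩ ⟨hb, hz⟩
  rw [mem_cylinder_iff] at hb hz
  have hbn : res b n = res a n := res_eq_res.2 fun m hm => hb m (lt_max_of_lt_left hm)
  have hzn : res z n = res x n := res_eq_res.2 fun m hm => hz m hm
  simp only [hbn, hzn]
  exact hb k (lt_max_of_lt_right k.lt_succ_self)

lemma analyticSet_diagonal : AnalyticSet diagonal := by
  have hclosed : IsClosed {p : (ℕ → ℕ) × (ℕ → ℕ) |
      ∀ n, p.1 (Encodable.encode (res p.1 n, res p.2 n)) = 1} := by
    simp only [ofPred_forall]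
    exact isClosed_iInter fun n => (isLocallyConstant_apply_encode_res n).isClosed_fiber 1
  convert hclosed.analyticSet.image_of_continuous continuous_fst
  ext a
  simp [diagonal, codedSet]

lemma exists_codedSet_eq_range {φ : (ℕ → ℕ) → ℕ → ℕ} (hφ : Continuous φ) :
    ∃ a, codedSet a = range φ := by
  classical
  let P : List ℕ × List ℕ → Prop := fun uv =>
    ∃ x, res (φ x) uv.1.length = uv.1 ∧ res x uv.1.length = uv.2
  refine ⟨fun k => if ∃ uv, P uv ∧ Encodable.encode uv = k then 1 else 0, ?_⟩
  ext y
  simp only [codedSet, mem_ofPred_eq, Encodable.encode_inj, exists_eq_right, ite_eq_left_iff,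
    zero_ne_one, imp_false, not_not, P, res_length]
  constructor
  · rintro ⟨x, hx⟩
    choose xn hφxn hxn using hx
    exact ⟨x, tendsto_nhds_unique ((hφ.tendsto x).comp (tendsto_of_res_eq hxn))
      (tendsto_of_res_eq hφxn)⟩
  · rintro ⟨x, rfl⟩
    exact ⟨x, fun n => ⟨x, rfl, rfl⟩⟩

lemma not_measurableSet_diagonal : ¬ MeasurableSet diagonal := by
  intro hD
  have hzero : (fun _ => 0 : ℕ → ℕ) ∈ diagonalᶜ := fun ⟨_, h⟩ => zero_ne_one (h 0)
  obtain ⟨φ, hφ, hrange⟩ := hD.compl.analyticSet.exists_continuous_range_eq ⟨_, hzero⟩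
  obtain ⟨a, ha⟩ := exists_codedSet_eq_range hφ
  exact iff_not_self (Set.ext_iff.1 (ha.trans hrange) a)

end BaireSpace

theorem exists_analyticSet_not_measurableSet {X : Type*} [TopologicalSpace X] [PolishSpace X]
    [MeasurableSpace X] [BorelSpace X] (hX : ¬ Countable X) :
    ∃ s : Set X, AnalyticSet s ∧ ¬ MeasurableSet s := by
  obtain ⟨φ, hφ, hD⟩ := BaireSpace.analyticSet_diagonal.exists_continuous_range_eq <|
    nonempty_iff_ne_empty.2 fun h => BaireSpace.not_measurableSet_diagonal (h ▸ .empty)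
  let e := PolishSpace.measurableEquivOfNotCountable BaireSpace.not_countable hX
  refine ⟨e '' range φ, ?_, fun h => BaireSpace.not_measurableSet_diagonal ?_⟩
  · rw [← range_comp, ← image_univ]
    exact MeasurableSet.univ.analyticSet_image (e.measurable.comp hφ.measurable)
  · rw [← hD, ← e.injective.preimage_image (range φ)]
    exact h.preimage e.measurable

section AlternatingMV

variable {P X Y : Type*}

def alternatingMV (Q : Set X) (T B : Set Y) (f : P → X) (g : P → Y) (x : X) : Set Y :=
  {y | x ∈ Q ∧ y ∈ T ∨ x ∉ Q ∧ y ∈ B ∨ ∃ p, f p = x ∧ g p = y}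

variable {Q : Set X} {T B : Set Y} {f : P → X} {g : P → Y}

lemma alternatingMV_nonempty (hT : T.Nonempty) (hB : B.Nonempty) (x : X) :
    (alternatingMV Q T B f g x).Nonempty := by
  by_cases hx : x ∈ Q
  · exact hT.imp fun _ ht => Or.inl ⟨hx, ht⟩
  · exact hB.imp fun _ hb => Or.inr (Or.inl ⟨hx, hb⟩)

lemma setOf_mem_alternatingMV :
    {q : X × Y | q.2 ∈ alternatingMV Q T B f g q.1} =
      Q ×ˢ T ∪ Qᶜ ×ˢ B ∪ range fun p => (f p, g p) := by
  ext ⟨x, y⟩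
  simp [alternatingMV, or_assoc]

lemma measurableSet_setOf_mem_alternatingMV [TopologicalSpace P] [PolishSpace P]
    [TopologicalSpace X] [T2Space X] [SecondCountableTopology X] [MeasurableSpace X] [BorelSpace X]
    [TopologicalSpace Y] [T2Space Y] [SecondCountableTopology Y] [MeasurableSpace Y] [BorelSpace Y]
    (hQ : MeasurableSet Q) (hT : MeasurableSet T) (hB : MeasurableSet B)
    (hf : Continuous f) (hg : Continuous g) (hg_inj : Function.Injective g) :
    MeasurableSet {q : X × Y | q.2 ∈ alternatingMV Q T B f g q.1} := by
  rw [setOf_mem_alternatingMV]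
  exact ((hQ.prod hT).union (hQ.compl.prod hB)).union <|
    measurableSet_range_of_continuous_injective (hf.prodMk hg)
      fun p p' h => hg_inj (congrArg Prod.snd h)

variable [MetricSpace X] [MetricSpace Y]

lemma not_mvContinuousAt_of_forall_notMem_closure {F : X → Set Y} {x : X}
    (h : ∀ y ∈ F x, ∃ D : Set X, Dense D ∧ y ∉ closure (⋃ x' ∈ D, F x')) :
    ¬ MVContinuousAt F x := by
  rintro ⟨y, hy, hcont⟩
  obtain ⟨D, hD, hyD⟩ := h y hy
  obtain ⟨ε, hε, hfar⟩ : ∃ ε > 0, ∀ z ∈ ⋃ x' ∈ D, F x', ε ≤ dist y z := by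
    simpa [Metric.mem_closure_iff] using hyD
  obtain ⟨δ, hδ, hnear⟩ := hcont ε hε
  obtain ⟨x', hx'D, hx'⟩ := hD.exists_dist_lt x hδ
  obtain ⟨y', hy', hyy'⟩ := hnear x' (by rwa [dist_comm])
  exact (hfar y' (mem_biUnion hx'D hy')).not_gt hyy'

lemma mvContinuousAt_alternatingMV (hT : range g ⊆ closure T) (hB : range g ⊆ closure B)
    (p : P) :
    MVContinuousAt (alternatingMV Q T B f g) (f p) := by
  refine ⟨g p, Or.inr (Or.inr ⟨p, rfl, rfl⟩), fun ε hε => ⟨1, one_pos, fun x' _ => ?_⟩⟩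
  by_cases hx' : x' ∈ Q
  · obtain ⟨t, ht, hdist⟩ := Metric.mem_closure_iff.1 (hT (mem_range_self p)) ε hε
    exact ⟨t, Or.inl ⟨hx', ht⟩, hdist⟩
  · obtain ⟨b, hb, hdist⟩ := Metric.mem_closure_iff.1 (hB (mem_range_self p)) ε hε
    exact ⟨b, Or.inr (Or.inl ⟨hx', hb⟩), hdist⟩

lemma mem_range_of_mvContinuousAt_alternatingMV (hQ : Dense Q) (hQc : Dense Qᶜ)
    (hT : ∀ t ∈ T, t ∉ closure (B ∪ range g)) (hB : ∀ b ∈ B, b ∉ closure (T ∪ range g))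
    {x : X} (hx : MVContinuousAt (alternatingMV Q T B f g) x) : x ∈ range f := by
  by_contra hxf
  refine not_mvContinuousAt_of_forall_notMem_closure ?_ hx
  rintro y (⟨-, hy⟩ | ⟨-, hy⟩ | ⟨p, hp, -⟩)
  · refine ⟨Qᶜ, hQc, fun hcl => hT y hy (closure_mono (iUnion₂_subset fun x' hx' => ?_) hcl)⟩
    rintro z (⟨hx'Q, -⟩ | ⟨-, hz⟩ | ⟨p, -, rfl⟩)
    exacts [absurd hx'Q hx', Or.inl hz, Or.inr (mem_range_self p)]
  · refine ⟨Q, hQ, fun hcl => hB y hy (closure_mono (iUnion₂_subset fun x' hx' => ?_) hcl)⟩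
    rintro z (⟨-, hz⟩ | ⟨hx'Q, -⟩ | ⟨p, -, rfl⟩)
    exacts [Or.inl hz, absurd hx' hx'Q, Or.inr (mem_range_self p)]
  · exact absurd ⟨p, hp⟩ hxf

end AlternatingMV

noncomputable section

namespace NestedInterval

/- Finite sequences are stored reversed, as by `PiNat.res`, so `i :: s` extends `s` by `i`.
Measured from `left s` in units of `len s`, the child `I (i :: s)` is
`[offset i, offset i + width i]`: these lie in `[1/3, 2/3]` and move left as `i` grows. -/

def offset (i : ℕ) : ℝ := 1 / 3 + (1 / 2) ^ i / 4

def width (i : ℕ) : ℝ := (1 / 2) ^ i / 16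

def len : List ℕ → ℝ
  | [] => 1
  | i :: s => len s * width i

def left : List ℕ → ℝ
  | [] => 0
  | i :: s => left s + len s * offset i

def I (s : List ℕ) : Set ℝ := Icc (left s) (left s + len s)

def mid (s : List ℕ) : Set ℝ := Icc (left s + len s / 3) (left s + 2 * len s / 3)

def top (s : List ℕ) : ℝ := left s + 5 * len s / 6

def bot (s : List ℕ) : ℝ := left s + len s / 6

def limit (α : ℕ → ℕ) : ℝ := ⨆ n, left (res α n)

lemma width_pos (i : ℕ) : 0 < width i := by
  unfold width; positivity

lemma len_pos : ∀ s, 0 < len s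
  | [] => one_pos
  | i :: s => mul_pos (len_pos s) (width_pos i)

lemma len_le (s : List ℕ) : len s ≤ (1 / 2) ^ s.length := by
  induction s with
  | nil => simp [len]
  | cons i s ih =>
    have hw : width i ≤ 1 / 2 := by
      have : (1 / 2 : ℝ) ^ i ≤ 1 := pow_le_one₀ (by norm_num) (by norm_num)
      unfold width; linarith
    calc len (i :: s) = len s * width i := rfl
      _ ≤ (1 / 2) ^ s.length * (1 / 2) :=
        mul_le_mul ih hw (width_pos i).le (by positivity)
      _ = (1 / 2) ^ (i :: s).length := by simp [pow_succ]

lemma cons_subset_mid (i : ℕ) (s : List ℕ) : I (i :: s) ⊆ mid s := by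
  have hl := len_pos s
  have hpow : (1 / 2 : ℝ) ^ i ≤ 1 := pow_le_one₀ (by norm_num) (by norm_num)
  have hoff : 1 / 3 ≤ offset i := by
    unfold offset; linarith [pow_pos (one_half_pos (α := ℝ)) i]
  have hend : offset i + width i ≤ 2 / 3 := by unfold offset width; linarith
  apply Icc_subset_Icc <;> simp only [left, len] <;> nlinarith

lemma mid_subset (s : List ℕ) : mid s ⊆ I s := by
  have := len_pos s
  exact Icc_subset_Icc (by linarith) (by linarith)

lemma cons_subset (i : ℕ) (s : List ℕ) : I (i :: s) ⊆ I s :=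
  (cons_subset_mid i s).trans (mid_subset s)

lemma subset_of_suffix {s t : List ℕ} (h : s <:+ t) : I t ⊆ I s := by
  obtain ⟨u, rfl⟩ := h
  induction u with
  | nil => exact subset_rfl
  | cons i u ih => exact (cons_subset i _).trans ih

lemma subset_unitInterval (s : List ℕ) : I s ⊆ Icc 0 1 := by
  simpa [I, left, len] using subset_of_suffix (List.nil_suffix (l := s))

lemma disjoint_cons {i j : ℕ} (hij : i ≠ j) (s : List ℕ) :
    Disjoint (I (i :: s)) (I (j :: s)) := by
  wlog h : i < j generalizing i j
  · exact (this hij.symm (hij.lt_or_gt.resolve_left h)).symm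
  have hl := len_pos s
  have hpow : (1 / 2 : ℝ) ^ j ≤ (1 / 2) ^ i / 2 := by
    calc (1 / 2 : ℝ) ^ j ≤ (1 / 2) ^ (i + 1) :=
          pow_le_pow_of_le_one (by norm_num) (by norm_num) h
      _ = (1 / 2) ^ i / 2 := by ring
  have hgap : offset j + width j < offset i := by
    unfold offset width; have : (0 : ℝ) < (1 / 2) ^ i := by positivity
    linarith
  rw [Set.disjoint_left]
  rintro y ⟨hy, -⟩ ⟨-, hy'⟩
  simp only [left, len] at hy hy'
  nlinarith

lemma disjoint_of_length_eq {s t : List ℕ} (hlen : s.length = t.length) (hne : s ≠ t) :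
    Disjoint (I s) (I t) := by
  induction s generalizing t with
  | nil => exact absurd (List.length_eq_zero_iff.1 hlen.symm).symm hne
  | cons i s ih =>
    obtain _ | ⟨j, t⟩ := t
    · simp at hlen
    by_cases hst : s = t
    · subst hst
      exact disjoint_cons (fun hij => hne (by rw [hij])) s
    · exact (ih (Nat.succ_injective hlen) hst).mono (cons_subset i s) (cons_subset j t)

lemma mem_mid_of_length_lt {s t : List ℕ} {y : ℝ} (hs : y ∈ I s) (ht : y ∈ I t)
    (hlen : s.length < t.length) : y ∈ mid s := by
  induction t with
  | nil => simp at hlen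
  | cons j t ih =>
    rcases Nat.lt_succ_iff_lt_or_eq.1 hlen with hlt | heq
    · exact ih (cons_subset j t ht) hlt
    · obtain rfl : s = t := by
        by_contra hne
        exact (disjoint_of_length_eq heq hne).notMem_of_mem_left hs (cons_subset j t ht)
      exact cons_subset_mid j s ht

lemma eq_of_mem_diff_mid {s t : List ℕ} {y : ℝ} (hs : y ∈ I s \ mid s)
    (ht : y ∈ I t \ mid t) : s = t := by
  rcases lt_trichotomy s.length t.length with hlt | heq | hgt
  · exact absurd (mem_mid_of_length_lt hs.1 ht.1 hlt) hs.2
  · by_contra hne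
    exact (disjoint_of_length_eq heq hne).notMem_of_mem_left hs.1 ht.1
  · exact absurd (mem_mid_of_length_lt ht.1 hs.1 hgt) ht.2

lemma dist_le_len {s : List ℕ} {x y : ℝ} (hx : x ∈ I s) (hy : y ∈ I s) :
    dist x y ≤ len s := by
  simpa using Real.dist_le_of_mem_Icc hx hy

lemma ball_top_subset (s : List ℕ) : Metric.ball (top s) (len s / 6) ⊆ I s \ mid s := by
  rintro y hy
  obtain ⟨h1, h2⟩ := Real.ball_eq_Ioo _ _ ▸ hy
  have := len_pos s
  unfold top at h1 h2
  exact ⟨⟨by linarith, by linarith⟩, fun h => by linarith [h.2]⟩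

lemma ball_bot_subset (s : List ℕ) : Metric.ball (bot s) (len s / 6) ⊆ I s \ mid s := by
  rintro y hy
  obtain ⟨h1, h2⟩ := Real.ball_eq_Ioo _ _ ▸ hy
  have := len_pos s
  unfold bot at h1 h2
  exact ⟨⟨by linarith, by linarith⟩, fun h => by linarith [h.1]⟩

lemma top_mem (s : List ℕ) : top s ∈ I s \ mid s :=
  ball_top_subset s (Metric.mem_ball_self (by linarith [len_pos s]))

lemma bot_mem (s : List ℕ) : bot s ∈ I s \ mid s :=
  ball_bot_subset s (Metric.mem_ball_self (by linarith [len_pos s]))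

lemma len_div_six_le_dist_top_bot (s : List ℕ) : len s / 6 ≤ dist (top s) (bot s) := by
  have := len_pos s
  rw [Real.dist_eq, abs_of_pos (by unfold top bot; linarith)]
  unfold top bot; linarith

lemma left_mem (s : List ℕ) : left s ∈ I s :=
  ⟨le_rfl, by linarith [len_pos s]⟩

lemma limit_mem (α : ℕ → ℕ) (n : ℕ) : limit α ∈ I (res α n) := by
  have hle : ∀ m, left (res α m) ≤ left (res α n) + len (res α n) := fun m => by
    have hk := left_mem (res α (max m n))
    have hm := subset_of_suffix (res_suffix α (le_max_left m n)) hk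
    have hn := subset_of_suffix (res_suffix α (le_max_right m n)) hk
    exact hm.1.trans hn.2
  exact ⟨le_ciSup ⟨_, forall_mem_range.2 hle⟩ n, ciSup_le hle⟩

lemma exists_len_res_lt (α : ℕ → ℕ) {ε : ℝ} (hε : 0 < ε) : ∃ n, len (res α n) < ε := by
  obtain ⟨n, hn⟩ := exists_pow_lt_of_lt_one hε one_half_lt_one
  exact ⟨n, (len_le _).trans_lt (by rwa [res_length])⟩

lemma continuous_limit : Continuous limit := by
  refine continuous_iff_continuousAt.2 fun α => Metric.tendsto_nhds.2 fun ε hε => ?_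
  obtain ⟨n, hn⟩ := exists_len_res_lt α hε
  filter_upwards [(isOpen_cylinder _ α n).mem_nhds (self_mem_cylinder α n)] with β hβ
  have hres : res β n = res α n := res_eq_res.2 (mem_cylinder_iff.1 hβ)
  exact (dist_le_len (hres ▸ limit_mem β n) (limit_mem α n)).trans_lt hn

lemma injective_limit : Function.Injective limit := by
  intro α β hαβ
  by_contra hne
  obtain ⟨n, hn⟩ : ∃ n, res α n ≠ res β n := by
    by_contra! h
    exact hne (res_injective (funext h))
  exact (disjoint_of_length_eq (by simp [res_length]) hn).notMem_of_mem_left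
    (limit_mem α n) (hαβ ▸ limit_mem β n)

lemma limit_mem_closure_range {p : List ℕ → ℝ} (hp : ∀ s, p s ∈ I s) (α : ℕ → ℕ) :
    limit α ∈ closure (range p) := by
  refine Metric.mem_closure_iff.2 fun ε hε => ?_
  obtain ⟨n, hn⟩ := exists_len_res_lt α hε
  exact ⟨p (res α n), mem_range_self _, (dist_le_len (limit_mem α n) (hp _)).trans_lt hn⟩

lemma notMem_closure_range_union_range_limit {p q : List ℕ → ℝ}
    (hp : ∀ s, Metric.ball (p s) (len s / 6) ⊆ I s \ mid s) (hq : ∀ s, q s ∈ I s \ mid s)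
    (hpq : ∀ s, len s / 6 ≤ dist (p s) (q s)) (s : List ℕ) :
    p s ∉ closure (range q ∪ range limit) := by
  intro hcl
  obtain ⟨y, hy, hlt⟩ := Metric.mem_closure_iff.1 hcl (len s / 6) (by linarith [len_pos s])
  have hmem := hp s (Metric.mem_ball'.2 hlt)
  rcases hy with ⟨t, rfl⟩ | ⟨α, rfl⟩
  · obtain rfl := eq_of_mem_diff_mid hmem (hq t)
    exact (hpq s).not_gt hlt
  · exact hmem.2 (mem_mid_of_length_lt hmem.1 (limit_mem α (s.length + 1)) (by simp))

end NestedInterval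

end

lemma dense_preimage_val_Icc {s : Set ℝ} (hs : Dense s) {a b : ℝ} (hab : a < b) :
    Dense (Subtype.val ⁻¹' s : Set (Icc a b)) := by
  rw [Subtype.dense_iff, Subtype.image_preimage_coe]
  calc Icc a b = closure (Ioo a b) := (closure_Ioo hab.ne).symm
    _ ⊆ closure (Ioo a b ∩ s) :=
      closure_minimal (hs.open_subset_closure_inter isOpen_Ioo) isClosed_closure
    _ ⊆ closure (Icc a b ∩ s) := closure_mono (inter_subset_inter_left _ Ioo_subset_Icc_self)

theorem exists_setOf_mvContinuousAt_eq_range {X : Type*} [MetricSpace X]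
    [SecondCountableTopology X] [MeasurableSpace X] [BorelSpace X] {Q : Set X} (hQ : Dense Q)
    (hQc : Dense Qᶜ) (hQm : MeasurableSet Q) {f : (ℕ → ℕ) → X} (hf : Continuous f) :
    ∃ F : X → Set (Icc (0 : ℝ) 1), (∀ x, (F x).Nonempty) ∧
      MeasurableSet {q : X × Icc (0 : ℝ) 1 | q.2 ∈ F q.1} ∧
      {x | MVContinuousAt F x} = range f := by
  open NestedInterval in
  set T := range <| codRestrict top (Icc (0 : ℝ) 1) fun s => subset_unitInterval s (top_mem s).1
  set B := range <| codRestrict bot (Icc (0 : ℝ) 1) fun s => subset_unitInterval s (bot_mem s).1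
  set g := codRestrict limit (Icc (0 : ℝ) 1) fun α => subset_unitInterval _ (limit_mem α 0)
  have hgT : range g ⊆ closure T := by
    rintro _ ⟨α, rfl⟩
    rw [closure_subtype, ← range_comp]
    exact limit_mem_closure_range (fun s => (top_mem s).1) α
  have hgB : range g ⊆ closure B := by
    rintro _ ⟨α, rfl⟩
    rw [closure_subtype, ← range_comp]
    exact limit_mem_closure_range (fun s => (bot_mem s).1) α
  have hT : ∀ t ∈ T, t ∉ closure (B ∪ range g) := by
    rintro _ ⟨s, rfl⟩
    rw [closure_subtype, image_union, ← range_comp, ← range_comp]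
    exact notMem_closure_range_union_range_limit ball_top_subset bot_mem
      len_div_six_le_dist_top_bot s
  have hB : ∀ b ∈ B, b ∉ closure (T ∪ range g) := by
    rintro _ ⟨s, rfl⟩
    rw [closure_subtype, image_union, ← range_comp, ← range_comp]
    exact notMem_closure_range_union_range_limit ball_bot_subset top_mem
      (fun s => (len_div_six_le_dist_top_bot s).trans_eq (dist_comm _ _)) s
  refine ⟨alternatingMV Q T B f g, alternatingMV_nonempty (range_nonempty _) (range_nonempty _),
    measurableSet_setOf_mem_alternatingMV hQm (countable_range _).measurableSet
      (countable_range _).measurableSet hf (continuous_limit.codRestrict _)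
      ((injective_codRestrict _).2 injective_limit), ?_⟩
  ext x
  exact ⟨mem_range_of_mvContinuousAt_alternatingMV hQ hQc hT hB,
    by rintro ⟨α, rfl⟩; exact mvContinuousAt_alternatingMV hgT hgB α⟩

theorem exists_multivalued_function_unitInterval_continuity_set_analytic_not_Borel :
    ∃ F : Set.Icc (0 : ℝ) 1 → Set (Set.Icc (0 : ℝ) 1),
      (∀ x, (F x).Nonempty) ∧
      @MeasurableSet _ (borel (Set.Icc (0 : ℝ) 1 × Set.Icc (0 : ℝ) 1))
        {p : Set.Icc (0 : ℝ) 1 × Set.Icc (0 : ℝ) 1 | p.2 ∈ F p.1} ∧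
      MeasureTheory.AnalyticSet {x : Set.Icc (0 : ℝ) 1 | MVContinuousAt F x} ∧
      ¬ @MeasurableSet _ (borel (Set.Icc (0 : ℝ) 1))
        {x : Set.Icc (0 : ℝ) 1 | MVContinuousAt F x} := by
  have hunc : ¬ Countable (Icc (0 : ℝ) 1) := by
    rw [← Cardinal.mk_le_aleph0_iff, Cardinal.mk_Icc_real one_pos]
    exact Cardinal.aleph0_lt_continuum.not_ge
  obtain ⟨A, hA, hAB⟩ := exists_analyticSet_not_measurableSet hunc
  obtain ⟨f, hf, rfl⟩ := hA.exists_continuous_range_eq <|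
    nonempty_iff_ne_empty.2 fun h => hAB (h ▸ .empty)
  obtain ⟨F, hne, hgraph, hcont⟩ := exists_setOf_mvContinuousAt_eq_range
    (Q := Subtype.val ⁻¹' range ((↑) : ℚ → ℝ))
    (dense_preimage_val_Icc Rat.denseRange_cast one_pos)
    (dense_preimage_val_Icc dense_irrational one_pos)
    ((countable_range _).preimage Subtype.val_injective).measurableSet hf
  refine ⟨F, hne, ?_, hcont ▸ hA, ?_⟩
  · rwa [← BorelSpace.measurable_eq]
  · rwa [hcont, ← BorelSpace.measurable_eq]
end

section
/- Let X be a metric space, let Y be a compact metric space, and let F be a multi-valued function from X to Y such that F(x) is a nonempty closed subset of Y for every x ∈ X and the graph of F is an Fσ (Σ⁰₂) subset of X × Y, i.e., a countable union of closed sets. Then the set {x ∈ X : F is strongly continuous at x} is a Gδ subset of X. -/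
/-- A multi-valued function `F : X → Set Y` is strongly continuous at `x`. -/
def MVStrongContinuousAt {X Y : Type*} [MetricSpace X] [MetricSpace Y]
    (F : X → Set Y) (x : X) : Prop :=
  ∀ y ∈ F x, ∀ ε > (0 : ℝ), ∃ δ > (0 : ℝ),
    ∀ x', dist x' x < δ → ∃ y' ∈ F x', dist y y' < ε

/-- A set is `Fσ` if it is a countable union of closed sets. -/
def IsFsigma {X : Type*} [TopologicalSpace X] (S : Set X) : Prop :=
  ∃ g : ℕ → Set X, (∀ n, IsClosed (g n)) ∧ S = ⋃ n, g n

theorem points_of_strong_continuity_Gdelta_of_compact_codomain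
    {X Y : Type*} [MetricSpace X] [MetricSpace Y] [CompactSpace Y]
    (F : X → Set Y)
    (hne : ∀ x, (F x).Nonempty)
    (hcl : ∀ x, IsClosed (F x))
    (hgraph : IsFsigma {p : X × Y | p.2 ∈ F p.1}) :
    IsGδ {x : X | MVStrongContinuousAt F x} := by
  classical
  obtain ⟨C, hCcl, hCgr⟩ := hgraph
  have hmemC : ∀ x y, y ∈ F x ↔ ∃ n, (x, y) ∈ C n := by
    intro x y
    have := Set.ext_iff.1 hCgr (x, y)
    simpa using this
  obtain ⟨b, hbc, hbne, hbasis⟩ := TopologicalSpace.exists_countable_basis Y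
  obtain ⟨V, hV⟩ := (hbc.insert (∅ : Set Y)).exists_eq_range (Set.insert_nonempty _ _)
  set W : ℕ → ℕ → Set Y := fun i k => {y | ∀ z ∉ V i, 1/(k+1 : ℝ) ≤ dist y z} with hW
  set D : ℕ → Set X := fun i => {x | ∀ y ∈ F x, y ∉ V i} with hD
  set K : ℕ × ℕ × ℕ → Set X := fun p =>
    closure (D p.1) ∩ Prod.fst '' ((C p.2.1) ∩ {q : X × Y | q.2 ∈ W p.1 p.2.2}) with hK
  have hWcl : ∀ i k, IsClosed (W i k) := by
    intro i k
    have : W i k = ⋂ z ∈ (V i)ᶜ, {y : Y | 1/(k+1 : ℝ) ≤ dist y z} := by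
      ext y; simp [hW, Set.mem_iInter]
    rw [this]
    exact isClosed_biInter fun z _ =>
      isClosed_le continuous_const (by fun_prop)
  have hKcl : ∀ p, IsClosed (K p) := by
    rintro ⟨i, n, k⟩
    exact isClosed_closure.inter <| isClosedMap_fst_of_compactSpace _
      ((hCcl n).inter ((hWcl i k).preimage continuous_snd))
  have hEq : {x : X | MVStrongContinuousAt F x} = ⋂ p, (K p)ᶜ := by
    ext x
    simp only [Set.mem_setOf_eq, Set.mem_iInter, Set.mem_compl_iff]
    constructor
    · rintro hx ⟨i, n, k⟩ ⟨hxcl, ⟨⟨x', y⟩, ⟨hyC, hyW⟩, rfl⟩⟩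
      have hyF : y ∈ F x' := (hmemC x' y).2 ⟨n, hyC⟩
      have hyV : y ∈ V i := by
        by_contra h
        have := hyW y h
        simp at this
        nlinarith [this]
      obtain ⟨δ, hδ, hδs⟩ := hx y hyF (1/(k+1 : ℝ)) (by positivity)
      obtain ⟨x'', hx''D, hx''d⟩ := Metric.mem_closure_iff.1 hxcl δ hδ
      obtain ⟨y', hy'F, hy'd⟩ := hδs x'' (by rw [dist_comm]; exact hx''d)
      have hy'V : y' ∈ V i := by
        by_contra h
        exact absurd (hyW y' h) (not_le.2 hy'd)
      exact hx''D y' hy'F hy'V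
    · intro hx y hyF ε hε
      obtain ⟨n, hyC⟩ := (hmemC x y).1 hyF
      obtain ⟨U, hUb, hyU, hUsub⟩ := hbasis.exists_subset_of_mem_open
        (Metric.mem_ball_self hε) Metric.isOpen_ball
      have : U ∈ Set.range V := by rw [← hV]; exact Set.mem_insert_of_mem _ hUb
      obtain ⟨i, rfl⟩ := this
      obtain ⟨r, hr, hball⟩ := Metric.isOpen_iff.1 (hbasis.isOpen hUb) y hyU
      obtain ⟨k, hk⟩ := exists_nat_one_div_lt hr
      have hyW : y ∈ W i k := by
        intro z hz
        by_contra h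
        push_neg at h
        exact hz (hball (by rw [Metric.mem_ball, dist_comm]; linarith))
      have hxK := hx ⟨i, n, k⟩
      have hxmem : x ∈ Prod.fst '' ((C n) ∩ {q : X × Y | q.2 ∈ W i k}) :=
        ⟨(x, y), ⟨hyC, hyW⟩, rfl⟩
      have hxncl : x ∉ closure (D i) := fun h => hxK ⟨h, hxmem⟩
      have : IsOpen (closure (D i))ᶜ := isClosed_closure.isOpen_compl
      obtain ⟨δ, hδ, hδsub⟩ := Metric.isOpen_iff.1 this x hxncl
      refine ⟨δ, hδ, fun x' hx' => ?_⟩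
      have hx'nD : x' ∉ D i := fun h =>
        hδsub (Metric.mem_ball.2 hx') (subset_closure h)
      simp only [hD, Set.mem_setOf_eq, not_forall] at hx'nD
      obtain ⟨y', hy'F, hy'V⟩ := hx'nD
      refine ⟨y', hy'F, ?_⟩
      have : y' ∈ Metric.ball y ε := hUsub (not_not.1 hy'V)
      rw [Metric.mem_ball] at this
      rw [dist_comm]; exact this
  rw [hEq]
  exact .iInter fun p => (hKcl p).isOpen_compl.isGδ
end

section
/- Let X and Y be metric spaces with Y separable and exhaustible by compact sets, and let F be a multi-valued function from X to Y such that F(x) is a nonempty closed subset of Y for every x ∈ X and the graph of F is an Fσ (Σ⁰₂) subset of X × Y, i.e., a countable union of closed sets. Then the set {x ∈ X : F is strongly continuous at x} is a Σ⁰₃ subset of X, i.e., a countable union of Gδ sets. -/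
/-- Projection along a compact set of a closed set is closed. -/
lemma isClosed_fst_image_aux {X Y : Type*} [TopologicalSpace X] [TopologicalSpace Y]
    {C : Set (X × Y)} {K : Set Y} (hC : IsClosed C) (hK : IsCompact K)
    (hsub : ∀ p ∈ C, p.2 ∈ K) : IsClosed (Prod.fst '' C) := by
  rw [← isOpen_compl_iff, isOpen_iff_mem_nhds]
  intro x hx
  have hsubn : ({x} ×ˢ K : Set (X × Y)) ⊆ Cᶜ := by
    rintro ⟨a, b⟩ ⟨ha, hb⟩ hmem
    exact hx ⟨(a, b), hmem, Set.mem_singleton_iff.mp ha⟩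
  obtain ⟨u, v, huo, hvo, hxu, hKv, huv⟩ :=
    generalized_tube_lemma isCompact_singleton hK hC.isOpen_compl hsubn
  refine Filter.mem_of_superset (huo.mem_nhds (hxu rfl)) ?_
  rintro a ha ⟨⟨a', b⟩, hmem, rfl⟩
  exact huv ⟨ha, hKv (hsub _ hmem)⟩ hmem

theorem points_of_strong_continuity_Sigma03
    {X Y : Type*} [MetricSpace X] [MetricSpace Y]
    [TopologicalSpace.SeparableSpace Y]
    (hY : ExhaustibleByCompacts Y)
    (F : X → Set Y)
    (hne : ∀ x, (F x).Nonempty)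
    (hcl : ∀ x, IsClosed (F x))
    (hgraph : IsFsigma {p : X × Y | p.2 ∈ F p.1}) :
    IsSigma03 {x : X | MVStrongContinuousAt F x} := by
  obtain ⟨K, hKc, -, hKU⟩ := hY
  obtain ⟨g, hgc, hge⟩ := hgraph
  obtain ⟨D, hDc, hDd⟩ := TopologicalSpace.exists_countable_dense Y
  -- the open sets U d r
  set U : Y → ℝ → Set X := fun d r =>
    {x | ∃ δ > (0 : ℝ), ∀ x', dist x' x < δ → ∃ y' ∈ F x', dist d y' < r} with hU
  have hUopen : ∀ d r, IsOpen (U d r) := by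
    intro d r
    rw [isOpen_iff_mem_nhds]
    rintro x ⟨δ, hδ, hx⟩
    refine Filter.mem_of_superset (Metric.ball_mem_nhds x (half_pos hδ)) ?_
    intro x'' hx''
    refine ⟨δ / 2, half_pos hδ, fun x' hx' => hx x' ?_⟩
    calc dist x' x ≤ dist x' x'' + dist x'' x := dist_triangle _ _ _
      _ < δ / 2 + δ / 2 := add_lt_add hx' hx''
      _ = δ := add_halves δ
  -- the Fσ sets P d q
  set P : Y → ℝ → Set X := fun d q => {x | ∃ y ∈ F x, dist y d ≤ q} with hP
  have hPcompl : ∀ d q, IsGδ (P d q)ᶜ := by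
    intro d q
    have hPeq : P d q = ⋃ n, ⋃ m,
        Prod.fst '' {p : X × Y | p ∈ g n ∧ dist p.2 d ≤ q ∧ p.2 ∈ K m} := by
      ext x
      simp only [hP, Set.mem_setOf_eq, Set.mem_iUnion, Set.mem_image]
      constructor
      · rintro ⟨y, hyF, hyd⟩
        have hyg : (x, y) ∈ ⋃ n, g n := by rw [← hge]; exact hyF
        obtain ⟨n, hn⟩ := Set.mem_iUnion.mp hyg
        have hyK : y ∈ ⋃ m, K m := hKU ▸ Set.mem_univ y
        obtain ⟨m, hm⟩ := Set.mem_iUnion.mp hyK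
        exact ⟨n, m, (x, y), ⟨hn, hyd, hm⟩, rfl⟩
      · rintro ⟨n, m, ⟨a, y⟩, ⟨hgn, hyd, -⟩, rfl⟩
        refine ⟨y, ?_, hyd⟩
        have : (a, y) ∈ ⋃ n, g n := Set.mem_iUnion.mpr ⟨n, hgn⟩
        rw [← hge] at this; exact this
    rw [hPeq, Set.compl_iUnion]
    refine IsGδ.iInter fun n => ?_
    rw [Set.compl_iUnion]
    refine IsGδ.iInter fun m => ?_
    refine IsOpen.isGδ ?_
    rw [isOpen_compl_iff]
    refine isClosed_fst_image_aux ?_ (hKc m) (fun p hp => hp.2.2)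
    have : {p : X × Y | p ∈ g n ∧ dist p.2 d ≤ q ∧ p.2 ∈ K m} =
        g n ∩ ((Prod.snd ⁻¹' Metric.closedBall d q) ∩ (Prod.snd ⁻¹' K m)) := by
      ext p
      simp only [Set.mem_setOf_eq, Set.mem_inter_iff, Set.mem_preimage, Metric.mem_closedBall]
    rw [this]
    exact (hgc n).inter ((Metric.isClosed_closedBall.preimage continuous_snd).inter
      (((hKc m).isClosed).preimage continuous_snd))
  -- the key identity
  have hkey : {x : X | MVStrongContinuousAt F x} =
      ⋂ d ∈ D, ⋂ q ∈ {q : ℚ | 0 < q}, ((P d (q : ℝ))ᶜ ∪ U d (3 * (q : ℝ))) := by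
    ext x
    simp only [Set.mem_setOf_eq, Set.mem_iInter, Set.mem_union, Set.mem_compl_iff]
    constructor
    · intro hcont d _ q hq
      by_cases hxP : x ∈ P d (q : ℝ)
      · right
        obtain ⟨y, hyF, hyd⟩ := hxP
        have hq' : (0 : ℝ) < q := by exact_mod_cast hq
        obtain ⟨δ, hδ, hx⟩ := hcont y hyF q hq'
        refine ⟨δ, hδ, fun x' hx' => ?_⟩
        obtain ⟨y', hy'F, hy'd⟩ := hx x' hx'
        refine ⟨y', hy'F, ?_⟩
        calc dist d y' ≤ dist d y + dist y y' := dist_triangle _ _ _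
          _ < q + q := by
              refine add_lt_add_of_le_of_lt ?_ hy'd
              rw [dist_comm]; exact hyd
          _ ≤ 3 * q := by linarith
      · left; exact hxP
    · intro hI y hyF ε hε
      obtain ⟨d, hdball, hdD⟩ := Metric.dense_iff.mp hDd y (ε / 5) (by linarith)
      rw [Metric.mem_ball] at hdball
      have hd : dist d y < ε / 5 := hdball
      obtain ⟨q, hq1, hq2⟩ := exists_rat_btwn hd
      have hq0 : (0 : ℚ) < q := by
        have := dist_nonneg (x := d) (y := y)
        exact_mod_cast lt_of_le_of_lt this hq1
      have hxP : x ∈ P d (q : ℝ) := ⟨y, hyF, by rw [dist_comm]; exact le_of_lt hq1⟩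
      rcases hI d hdD q hq0 with h | h
      · exact absurd hxP h
      · obtain ⟨δ, hδ, hx⟩ := h
        refine ⟨δ, hδ, fun x' hx' => ?_⟩
        obtain ⟨y', hy'F, hy'd⟩ := hx x' hx'
        refine ⟨y', hy'F, ?_⟩
        calc dist y y' ≤ dist y d + dist d y' := dist_triangle _ _ _
          _ < ε / 5 + 3 * q := by
              refine add_lt_add_of_le_of_lt ?_ hy'd
              rw [dist_comm]; linarith
          _ < ε := by linarith
  -- conclude: the set is Gδ, hence Σ⁰₃
  have hGδ : IsGδ {x : X | MVStrongContinuousAt F x} := by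
    rw [hkey]
    refine IsGδ.biInter hDc fun d _ => ?_
    refine IsGδ.biInter (Set.to_countable _) fun q _ => ?_
    exact (hPcompl d (q : ℝ)).union (hUopen d (3 * (q : ℝ))).isGδ
  exact ⟨fun _ => {x : X | MVStrongContinuousAt F x}, fun _ => hGδ,
    (Set.iUnion_const _).symm⟩
end

section
/- Let X and Y be complete separable metric spaces and let F be a multi-valued function from X to Y with nonempty values whose graph is an analytic subset of X × Y. Then the set {x ∈ X : F is strongly continuous at x} is a co-analytic subset of X, i.e., its complement in X is analytic. -/
private lemma analyticSet_inter' {α : Type*} [TopologicalSpace α] [T2Space α]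
    {A B : Set α} (hA : MeasureTheory.AnalyticSet A) (hB : MeasureTheory.AnalyticSet B) :
    MeasureTheory.AnalyticSet (A ∩ B) := by
  have : A ∩ B = ⋂ b : Bool, if b then A else B := by
    ext p; simp [Bool.forall_bool, and_comm]
  rw [this]
  exact MeasureTheory.AnalyticSet.iInter fun b => by cases b <;> simpa

theorem points_of_strong_continuity_coanalytic_of_analytic_graph
    {X Y : Type*} [MetricSpace X] [CompleteSpace X]
    [TopologicalSpace.SeparableSpace X]
    [MetricSpace Y] [CompleteSpace Y] [TopologicalSpace.SeparableSpace Y]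
    (F : X → Set Y)
    (hne : ∀ x, (F x).Nonempty)
    (hgraph : MeasureTheory.AnalyticSet {p : X × Y | p.2 ∈ F p.1}) :
    MeasureTheory.AnalyticSet {x : X | MVStrongContinuousAt F x}ᶜ := by
  obtain ⟨s, hs_count, hs_dense⟩ := TopologicalSpace.exists_countable_dense Y
  haveI : Countable s := hs_count.to_subtype
  -- the pieces of the union
  set P : Y → ℝ → Set X := fun z q =>
    {x : X | ∃ y ∈ F x, dist y z < q} ∩
      closure {x' : X | ∀ y' ∈ F x', q ≤ dist z y'} with hP
  have hEq : {x : X | MVStrongContinuousAt F x}ᶜ =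
      ⋃ i : s × ℚ, P (i.1 : Y) (i.2 : ℝ) := by
    ext x
    simp only [Set.mem_compl_iff, Set.mem_setOf_eq, Set.mem_iUnion, hP,
      Set.mem_inter_iff, Set.mem_setOf_eq]
    constructor
    · intro hx
      rw [MVStrongContinuousAt] at hx
      push_neg at hx
      obtain ⟨y, hyF, ε, hε, hfail⟩ := hx
      obtain ⟨z, hzs, hz⟩ := hs_dense.exists_dist_lt y (by positivity : (0:ℝ) < ε/3)
      have hd : dist y z < ε - dist y z := by linarith
      obtain ⟨q, hq1, hq2⟩ := exists_rat_btwn hd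
      refine ⟨⟨⟨z, hzs⟩, q⟩, ⟨y, hyF, hq1⟩, ?_⟩
      rw [Metric.mem_closure_iff]
      intro r hr
      obtain ⟨x', hx'd, hx'⟩ := hfail r hr
      refine ⟨x', ?_, by rwa [dist_comm]⟩
      intro y' hy'
      have h1 : ε ≤ dist y y' := hx' y' hy'
      have h2 : dist y y' ≤ dist y z + dist z y' := dist_triangle _ _ _
      linarith
    · rintro ⟨⟨⟨z, hzs⟩, q⟩, ⟨y, hyF, hdy⟩, hcl⟩
      intro hsc
      have hε : (0:ℝ) < (q:ℝ) - dist y z := by linarith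
      obtain ⟨δ, hδ, hδ'⟩ := hsc y hyF _ hε
      rw [Metric.mem_closure_iff] at hcl
      obtain ⟨x', hx's, hx'd⟩ := hcl δ hδ
      obtain ⟨y', hy'F, hy'd⟩ := hδ' x' (by rwa [dist_comm])
      have h1 : (q:ℝ) ≤ dist z y' := hx's y' hy'F
      have h2 : dist z y' ≤ dist z y + dist y y' := dist_triangle _ _ _
      rw [dist_comm z y] at h2
      linarith
  rw [hEq]
  apply MeasureTheory.AnalyticSet.iUnion
  rintro ⟨⟨z, -⟩, q⟩
  have h1 : MeasureTheory.AnalyticSet {x : X | ∃ y ∈ F x, dist y z < (q:ℝ)} := by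
    have : {x : X | ∃ y ∈ F x, dist y z < (q:ℝ)} =
        Prod.fst '' ({p : X × Y | p.2 ∈ F p.1} ∩ {p : X × Y | dist p.2 z < (q:ℝ)}) := by
      ext x
      simp only [Set.mem_setOf_eq, Set.mem_image, Set.mem_inter_iff, Prod.exists]
      constructor
      · rintro ⟨y, hy, hd⟩; exact ⟨x, y, ⟨hy, hd⟩, rfl⟩
      · rintro ⟨a, y, ⟨hy, hd⟩, rfl⟩; exact ⟨y, hy, hd⟩
    rw [this]
    apply MeasureTheory.AnalyticSet.image_of_continuous _ continuous_fst
    borelize (X × Y)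
    have hopen : IsOpen {p : X × Y | dist p.2 z < (q:ℝ)} :=
      isOpen_lt ((continuous_dist.comp (continuous_snd.prodMk continuous_const))) continuous_const
    exact analyticSet_inter' hgraph hopen.measurableSet.analyticSet
  exact analyticSet_inter' h1 (IsClosed.analyticSet isClosed_closure)
end

section
/- Let Γ be a family of subsets of ℝ which is countable and closed under complementation (if A ∈ Γ then ℝ \ A ∈ Γ). Then there exists a function f : ℝ → ℝ taking values in the set {0} ∪ {1/(n+1) : n ∈ ℕ} such that the set {x ∈ ℝ : f is continuous at x} is not a member of Γ. -/
lemma cont_set_eq (t : ℝ) :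
    {x : ℝ | ContinuousAt (fun x : ℝ => if x = t then (1:ℝ) else 0) x} = {t}ᶜ := by
  ext x
  simp only [Set.mem_setOf_eq, Set.mem_compl_iff, Set.mem_singleton_iff]
  constructor
  · intro hc hx
    rw [hx] at hc
    have h1 : Filter.Tendsto (fun x : ℝ => if x = t then (1:ℝ) else 0) (nhdsWithin t {t}ᶜ) (nhds 1) := by
      simpa using hc.continuousWithinAt.tendsto
    have h0 : Filter.Tendsto (fun x : ℝ => if x = t then (1:ℝ) else 0) (nhdsWithin t {t}ᶜ) (nhds 0) := by
      apply Filter.Tendsto.congr' _ tendsto_const_nhds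
      filter_upwards [self_mem_nhdsWithin] with y hy
      exact (if_neg hy).symm
    have : (0:ℝ) = 1 := tendsto_nhds_unique h0 h1
    norm_num at this
  · intro hx
    have hopen : {t}ᶜ ∈ nhds x := by
      exact IsOpen.mem_nhds isOpen_compl_singleton hx
    have : (fun x : ℝ => if x = t then (1:ℝ) else 0) =ᶠ[nhds x] (fun _ => (0:ℝ)) := by
      filter_upwards [hopen] with y hy
      exact if_neg hy
    exact ContinuousAt.congr continuousAt_const this.symm

theorem exists_function_continuity_set_not_in_countable_family
    (Γ : Set (Set ℝ))
    (hcount : Γ.Countable)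
    (hcompl : ∀ A ∈ Γ, Aᶜ ∈ Γ) :
    ∃ f : ℝ → ℝ,
      (∀ x, f x ∈ insert (0 : ℝ) (Set.range fun n : ℕ => 1 / ((n : ℝ) + 1))) ∧
      {x : ℝ | ContinuousAt f x} ∉ Γ := by
  -- find t with {t}ᶜ ∉ Γ
  have hg : ∃ t : ℝ, ({t}ᶜ : Set ℝ) ∉ Γ := by
    by_contra h
    push_neg at h
    have hinj : Function.Injective (fun t : ℝ => ({t}ᶜ : Set ℝ)) := by
      intro a b hab
      simp only [compl_inj_iff, Set.singleton_eq_singleton_iff] at hab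
      exact hab
    have hcnt : ((fun t : ℝ => ({t}ᶜ : Set ℝ)) ⁻¹' Γ).Countable :=
      hcount.preimage hinj
    have : ((fun t : ℝ => ({t}ᶜ : Set ℝ)) ⁻¹' Γ) = Set.univ := by
      ext t; simp [h t]
    rw [this] at hcnt
    exact Cardinal.not_countable_real hcnt
  obtain ⟨t, ht⟩ := hg
  refine ⟨fun x => if x = t then 1 else 0, ?_, ?_⟩
  · intro x
    by_cases hx : x = t
    · simp only [hx, if_true]
      right
      exact ⟨0, by norm_num⟩
    · simp [hx]
  · rw [cont_set_eq t]
    exact ht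
end
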